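/- Let m ≥ 0 and let P ⊂ [0,1)² be the separated point set from the construction (one point in each dyadic square of a maximally dist_H-separated family of 2^{2m+1} squares of side 2^{-2m-1}). Let R = I × J be a standard rectangle (a dyadic rectangle in [0,1)² of area 2^{-2m-2} containing a point of P), with p_R ∈ R ∩ P, and suppose ℓ ≥ 1 is such that I × J^{(ℓ+1)} ⊆ [0,1)². Then the rectangle I_{(ℓ)} × J^{(ℓ+1)} contains exactly one point q of P with q ≠ p_R, and moreover q ∈ I_{(ℓ)} × (J^{(ℓ+1)} \ J^{(ℓ)}). -/

import Mathlib

/-!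
The rectangle `I_{(ℓ)} × J^{(ℓ+1)}` is dyadic of area `2^{-2m-1}`, so it contains exactly one
point `q` of `P`, and `q ≠ p_R` because `p_R.1 ∉ I_{(ℓ)}`. If `q` lay in `I_{(ℓ)} × J^{(ℓ)}`,
then `p_R` and `q` would both lie in the dyadic rectangle `Î × J^{(ℓ)}`, where `Î` is the
parent of `I_{(ℓ)}`; this rectangle also has area `2^{-2m-1} < 2^{-2m}`, contradicting the
separation of `P`.
-/

open MeasureTheory
open scoped ENNReal

/-- A dyadic interval `[k·2^n, (k+1)·2^n)`. -/
def IsDyadicInterval (I : Set ℝ) : Prop :=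
  ∃ k n : ℤ, I = Set.Ico ((k : ℝ) * 2 ^ n) (((k : ℝ) + 1) * 2 ^ n)

/-- An axis-parallel dyadic rectangle in the plane. -/
def IsDyadicRect (R : Set (ℝ × ℝ)) : Prop :=
  ∃ I J : Set ℝ, IsDyadicInterval I ∧ IsDyadicInterval J ∧ R = I ×ˢ J

def unitSq : Set (ℝ × ℝ) := Set.Ico (0 : ℝ) 1 ×ˢ Set.Ico (0 : ℝ) 1

lemma volume_prod_eq_two_zpow {A B I J : Set ℝ} {i j n : ℤ}
    (hA : volume A = 2 ^ i * volume I) (hB : volume B = 2 ^ j * volume J)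
    (hIJ : volume (I ×ˢ J) = 2 ^ n) :
    volume (A ×ˢ B) = 2 ^ (i + j + n) := by
  rw [Measure.volume_eq_prod, Measure.prod_prod] at hIJ ⊢
  rw [hA, hB, ENNReal.zpow_add two_ne_zero ENNReal.ofNat_ne_top,
    ENNReal.zpow_add two_ne_zero ENNReal.ofNat_ne_top, ← hIJ]
  ring

lemma two_zpow_sub_one_lt (n : ℤ) : (2 : ℝ≥0∞) ^ (n - 1) < 2 ^ n := by
  rw [ENNReal.zpow_sub two_ne_zero ENNReal.ofNat_ne_top, zpow_one, ← div_eq_mul_inv]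
  exact ENNReal.half_lt_self (ENNReal.zpow_pos two_ne_zero ENNReal.ofNat_ne_top n).ne'
    (ENNReal.zpow_ne_top two_ne_zero ENNReal.ofNat_ne_top n)

theorem stmt12_general (m : ℕ) (P : Finset (ℝ × ℝ))
    -- every dyadic rectangle of area `2^{-2m-1}` in the unit square contains exactly
    -- one point of `P`
    (hP1 : ∀ R : Set (ℝ × ℝ), IsDyadicRect R → R ⊆ unitSq →
      volume R = (2 : ℝ≥0∞) ^ (-(2 * (m : ℤ)) - 1) → ∃! q, q ∈ P ∧ q ∈ R)
    -- any dyadic rectangle containing two distinct points of `P` has area `≥ 2^{-2m}`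
    (hP2 : ∀ p ∈ P, ∀ q ∈ P, p ≠ q → ∀ R : Set (ℝ × ℝ), IsDyadicRect R →
      p ∈ R → q ∈ R → (2 : ℝ≥0∞) ^ (-(2 * (m : ℤ))) ≤ volume R)
    -- the standard rectangle `R = I × J` with its point `p`
    (I J : Set ℝ)
    (hRvol : volume (I ×ˢ J) = (2 : ℝ≥0∞) ^ (-(2 * (m : ℤ)) - 2))
    (p : ℝ × ℝ) (hpP : p ∈ P) (hpR : p ∈ I ×ˢ J)
    (ℓ : ℕ)
    -- `Iℓ = I_{(ℓ)}`: the generation-`ℓ` dyadic descendant of `I` not containing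
    -- `p.1` but whose dyadic parent contains `p.1`
    (Iℓ : Set ℝ) (hIℓ : IsDyadicInterval Iℓ) (hIℓI : Iℓ ⊆ I)
    (hIℓvol : volume Iℓ = (2 : ℝ≥0∞) ^ (-(ℓ : ℤ)) * volume I)
    (hIℓp : p.1 ∉ Iℓ)
    (hIℓpar : ∃ Ihat : Set ℝ, IsDyadicInterval Ihat ∧ Iℓ ⊆ Ihat ∧
      volume Ihat = 2 * volume Iℓ ∧ p.1 ∈ Ihat)
    -- `Jup = J^{(ℓ+1)}`: the dyadic ancestor of `J` of generation `ℓ+1`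
    (Jup : Set ℝ) (hJup : IsDyadicInterval Jup)
    (hJupvol : volume Jup = (2 : ℝ≥0∞) ^ ((ℓ : ℤ) + 1) * volume J)
    -- `Jl = J^{(ℓ)}`: the dyadic ancestor of `J` of generation `ℓ`
    (Jl : Set ℝ) (hJl : IsDyadicInterval Jl) (hJJl : J ⊆ Jl)
    (hJlvol : volume Jl = (2 : ℝ≥0∞) ^ (ℓ : ℤ) * volume J)
    (hcontain : I ×ˢ Jup ⊆ unitSq) :
    ∃ q, (q ∈ P ∧ q ≠ p ∧ q ∈ Iℓ ×ˢ (Jup \ Jl)) ∧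
      ∀ q', q' ∈ P → q' ≠ p → q' ∈ Iℓ ×ˢ Jup → q' = q := by
  obtain ⟨Ihat, hIhat, hIℓIhat, hIhatvol, hpIhat⟩ := hIℓpar
  have hvol : volume (Iℓ ×ˢ Jup) = (2 : ℝ≥0∞) ^ (-(2 * (m : ℤ)) - 1) := by
    convert volume_prod_eq_two_zpow hIℓvol hJupvol hRvol using 2; ring
  obtain ⟨q, ⟨hqP, hqIℓ, hqJup⟩, hq_unique⟩ := hP1 _ ⟨Iℓ, Jup, hIℓ, hJup, rfl⟩
    ((Set.prod_mono hIℓI le_rfl).trans hcontain) hvol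
  have hqp : q ≠ p := fun h => hIℓp (h ▸ hqIℓ)
  have hqJl : q.2 ∉ Jl := by
    intro hqJl
    have hIhatvol' : volume Ihat = 2 ^ (1 - (ℓ : ℤ)) * volume I := by
      rw [hIhatvol, hIℓvol, sub_eq_add_neg,
        ENNReal.zpow_add two_ne_zero ENNReal.ofNat_ne_top, zpow_one, mul_assoc]
    have hvol' : volume (Ihat ×ˢ Jl) = (2 : ℝ≥0∞) ^ (-(2 * (m : ℤ)) - 1) := by
      convert volume_prod_eq_two_zpow hIhatvol' hJlvol hRvol using 2; ring
    have hsep := hP2 p hpP q hqP hqp.symm _ ⟨Ihat, Jl, hIhat, hJl, rfl⟩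
      ⟨hpIhat, hJJl hpR.2⟩ ⟨hIℓIhat hqIℓ, hqJl⟩
    exact (hvol' ▸ two_zpow_sub_one_lt _).not_ge hsep
  exact ⟨q, ⟨hqP, hqp, hqIℓ, hqJup, hqJl⟩, fun q' hq'P _ hq' => hq_unique q' ⟨hq'P, hq'⟩⟩

/-- Lemma (LocalizePs): if `R = I × J` is a standard rectangle (dyadic, of area
`2^{-2m-2}`, containing the point `p ∈ P`), `ℓ ≥ 1`, and `I × J^{(ℓ+1)} ⊆ [0,1)²`,
then `I_{(ℓ)} × J^{(ℓ+1)}` contains exactly one point `q ∈ P` with `q ≠ p`, and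
moreover `q ∈ I_{(ℓ)} × (J^{(ℓ+1)} \ J^{(ℓ)})`. -/
theorem stmt12 (m : ℕ) (P : Finset (ℝ × ℝ))
    (hPsub : (↑P : Set (ℝ × ℝ)) ⊆ unitSq)
    -- every dyadic rectangle of area `2^{-2m-1}` in the unit square contains exactly
    -- one point of `P`
    (hP1 : ∀ R : Set (ℝ × ℝ), IsDyadicRect R → R ⊆ unitSq →
      volume R = (2 : ℝ≥0∞) ^ (-(2 * (m : ℤ)) - 1) → ∃! q, q ∈ P ∧ q ∈ R)
    -- any dyadic rectangle containing two distinct points of `P` has area `≥ 2^{-2m}`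
    (hP2 : ∀ p ∈ P, ∀ q ∈ P, p ≠ q → ∀ R : Set (ℝ × ℝ), IsDyadicRect R →
      p ∈ R → q ∈ R → (2 : ℝ≥0∞) ^ (-(2 * (m : ℤ))) ≤ volume R)
    -- the standard rectangle `R = I × J` with its point `p`
    (I J : Set ℝ) (hI : IsDyadicInterval I) (hJ : IsDyadicInterval J)
    (hRsub : I ×ˢ J ⊆ unitSq)
    (hRvol : volume (I ×ˢ J) = (2 : ℝ≥0∞) ^ (-(2 * (m : ℤ)) - 2))
    (p : ℝ × ℝ) (hpP : p ∈ P) (hpR : p ∈ I ×ˢ J)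
    (ℓ : ℕ) (hℓ : 1 ≤ ℓ)
    -- `Iℓ = I_{(ℓ)}`: the generation-`ℓ` dyadic descendant of `I` not containing
    -- `p.1` but whose dyadic parent contains `p.1`
    (Iℓ : Set ℝ) (hIℓ : IsDyadicInterval Iℓ) (hIℓI : Iℓ ⊆ I)
    (hIℓvol : volume Iℓ = (2 : ℝ≥0∞) ^ (-(ℓ : ℤ)) * volume I)
    (hIℓp : p.1 ∉ Iℓ)
    (hIℓpar : ∃ Ihat : Set ℝ, IsDyadicInterval Ihat ∧ Iℓ ⊆ Ihat ∧
      volume Ihat = 2 * volume Iℓ ∧ p.1 ∈ Ihat)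
    -- `Jup = J^{(ℓ+1)}`: the dyadic ancestor of `J` of generation `ℓ+1`
    (Jup : Set ℝ) (hJup : IsDyadicInterval Jup) (hJJup : J ⊆ Jup)
    (hJupvol : volume Jup = (2 : ℝ≥0∞) ^ ((ℓ : ℤ) + 1) * volume J)
    -- `Jl = J^{(ℓ)}`: the dyadic ancestor of `J` of generation `ℓ`
    (Jl : Set ℝ) (hJl : IsDyadicInterval Jl) (hJJl : J ⊆ Jl)
    (hJlvol : volume Jl = (2 : ℝ≥0∞) ^ (ℓ : ℤ) * volume J)
    (hcontain : I ×ˢ Jup ⊆ unitSq) :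
    ∃ q, (q ∈ P ∧ q ≠ p ∧ q ∈ Iℓ ×ˢ (Jup \ Jl)) ∧
      ∀ q', q' ∈ P → q' ≠ p → q' ∈ Iℓ ×ˢ Jup → q' = q :=
  stmt12_general m P hP1 hP2 I J hRvol p hpP hpR ℓ Iℓ hIℓ hIℓI hIℓvol hIℓp hIℓpar Jup hJup hJupvol
    Jl hJl hJJl hJlvol hcontain
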